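/- For n ≥ 2, the independence number of the commuting graph Δ(B_n) is 3: the set {(1,1), (1,2), (2,1)} is an independent set, and every independent set has at most 3 vertices. -/

import Mathlib

/-- Multiplication of nonzero elements of the Brandt semigroup `B_n`:
`(i,j)·(k,l) = (i,l)` if `j = k`, and `0` (here `none`) otherwise. -/
def brandtMul {n : ℕ} (x y : Fin n × Fin n) : Option (Fin n × Fin n) :=
  if x.2 = y.1 then some (x.1, y.2) else none

/-- The commuting graph of the Brandt semigroup `B_n`. -/
def brandtGraph (n : ℕ) : SimpleGraph (Fin n × Fin n) where
  Adj x y := x ≠ y ∧ brandtMul x y = brandtMul y x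
  symm := ⟨by intro x y h; exact ⟨h.1.symm, h.2.symm⟩⟩
  loopless := ⟨by intro x h; exact h.1 rfl⟩

instance {n : ℕ} : DecidableRel (brandtGraph n).Adj :=
  fun x y => decidable_of_iff (x ≠ y ∧ brandtMul x y = brandtMul y x) Iff.rfl

theorem brandtGraph_adj_iff {n : ℕ} {x y : Fin n × Fin n} :
    (brandtGraph n).Adj x y ↔ x ≠ y ∧ x.2 ≠ y.1 ∧ y.2 ≠ x.1 := by
  obtain ⟨x₁, x₂⟩ := x
  obtain ⟨y₁, y₂⟩ := y
  simp only [brandtGraph, brandtMul, ne_eq, Prod.mk.injEq]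
  grind

theorem Set.ncard_le_three_of_forall_four_ne {α : Type*} {s : Set α}
    (h : ∀ a ∈ s, ∀ b ∈ s, ∀ c ∈ s, ∀ d ∈ s,
      a ≠ b → a ≠ c → a ≠ d → b ≠ c → b ≠ d → c ≠ d → False) :
    s.ncard ≤ 3 := by
  by_contra! hs
  have hfin : s.Finite := Set.finite_of_ncard_pos (by omega)
  obtain ⟨a, ha⟩ := Set.nonempty_of_ncard_ne_zero (by omega : s.ncard ≠ 0)
  have hrest : 2 < (s \ {a}).ncard := by
    rw [Set.ncard_sdiff_singleton_of_mem ha]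
    omega
  obtain ⟨b, c, d, ⟨hb, hab⟩, ⟨hc, hac⟩, ⟨hd, had⟩, hbc, hbd, hcd⟩ :=
    (Set.two_lt_ncard_iff hfin.sdiff).1 hrest
  exact h a ha b hb c hc d hd (Ne.symm hab) (Ne.symm hac) (Ne.symm had) hbc hbd hcd

/- Some element of the four is followed by two others, which then share their first coordinate;
linking these two forces one of them to be a loop `(i, i)`, and no fourth element is linked to
all three. -/
theorem not_four_pairwise_linked {β : Type*} {a b c d : β × β}
    (hab : a ≠ b) (hac : a ≠ c) (had : a ≠ d) (hbc : b ≠ c) (hbd : b ≠ d) (hcd : c ≠ d)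
    (lab : a.2 = b.1 ∨ b.2 = a.1) (lac : a.2 = c.1 ∨ c.2 = a.1)
    (lad : a.2 = d.1 ∨ d.2 = a.1) (lbc : b.2 = c.1 ∨ c.2 = b.1)
    (lbd : b.2 = d.1 ∨ d.2 = b.1) (lcd : c.2 = d.1 ∨ d.2 = c.1) : False := by
  obtain ⟨a₁, a₂⟩ := a
  obtain ⟨b₁, b₂⟩ := b
  obtain ⟨c₁, c₂⟩ := c
  obtain ⟨d₁, d₂⟩ := d
  simp only [ne_eq, Prod.mk.injEq] at *
  grind

theorem brandt_indep_number (n : ℕ) (hn : 2 ≤ n) :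
    ({(⟨⟨0, by omega⟩, ⟨0, by omega⟩⟩ : Fin n × Fin n), ⟨⟨0, by omega⟩, ⟨1, by omega⟩⟩,
        ⟨⟨1, by omega⟩, ⟨0, by omega⟩⟩} : Set (Fin n × Fin n)).Pairwise
      (fun x y => ¬ (brandtGraph n).Adj x y) ∧
    ∀ s : Set (Fin n × Fin n),
      s.Pairwise (fun x y => ¬ (brandtGraph n).Adj x y) → s.ncard ≤ 3 := by
  refine ⟨?_, fun s hs => ?_⟩
  · intro x hx y hy hxy
    simp only [Set.mem_insert_iff, Set.mem_singleton_iff] at hx hy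
    rcases hx with rfl | rfl | rfl <;> rcases hy with rfl | rfl | rfl <;>
      simp_all [brandtGraph_adj_iff, Fin.ext_iff]
  · have linked {x y} (hx : x ∈ s) (hy : y ∈ s) (hxy : x ≠ y) : x.2 = y.1 ∨ y.2 = x.1 := by
      have hxy' : ¬ (brandtGraph n).Adj x y := hs hx hy hxy
      rw [brandtGraph_adj_iff] at hxy'
      tauto
    exact Set.ncard_le_three_of_forall_four_ne fun a ha b hb c hc d hd hab hac had hbc hbd hcd =>
      not_four_pairwise_linked hab hac had hbc hbd hcd (linked ha hb hab) (linked ha hc hac)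
        (linked ha hd had) (linked hb hc hbc) (linked hb hd hbd) (linked hc hd hcd)
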